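/- The sequence (ι_ε^k)_{k} converges to ι_ε in the L²([0,1])-norm as k tends to infinity: lim_{k→∞} ∫₀¹ (ι_ε^k(u) − ι_ε(u))² du = 0. -/

import Mathlib

/-! With `h = 1/k`, `g_ε^{k,+}` and `g_ε^{k,−}` are `h⁻¹ (1_{(a, a+h]} − 1_{(a+h, a+2h]})` for
`a = 0` and `a = ε − h`, and the primitive of such a function is a tent of height one on
`[a, a + 2h]`. Hence `c_ε^{k,±} ∫_{(0,u]} (∫₀^y g_ε^{k,±}) W(dy)` is `ε⁻¹` times the `W`-mass of
that tent on `(0, u]` relative to its mass on `(0, 1]`: it lies in `[0, ε⁻¹]` for `u ≤ 1`, vanishes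
for `u ≤ a`, and equals `ε⁻¹` for `a + 2h ≤ u ≤ 1`, the total mass being positive because `W` is
strictly increasing. So `|ι_ε^k| ≤ ε⁻¹` on `[0, 1]`, and `ι_ε^k(u) = ι_ε(u)` for all large `k`
whenever `0 < u ≤ 1` and `u ≠ ε`; dominated convergence concludes. -/

open MeasureTheory Set

/-- `g_ε^{k,+}(z) = k[1_{(0,1/k]}(z) − 1_{(1/k,2/k]}(z)]`. -/
noncomputable def gPlus (k : ℕ) (z : ℝ) : ℝ :=
  (k:ℝ) * ((Set.Ioc (0:ℝ) (1/(k:ℝ))).indicator (fun _ => (1:ℝ)) z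
    - (Set.Ioc (1/(k:ℝ)) (2/(k:ℝ))).indicator (fun _ => (1:ℝ)) z)

/-- `g_ε^{k,−}(z) = k[1_{(ε−1/k,ε]}(z) − 1_{(ε,ε+1/k]}(z)]`. -/
noncomputable def gMinus (ε : ℝ) (k : ℕ) (z : ℝ) : ℝ :=
  (k:ℝ) * ((Set.Ioc (ε - 1/(k:ℝ)) ε).indicator (fun _ => (1:ℝ)) z
    - (Set.Ioc ε (ε + 1/(k:ℝ))).indicator (fun _ => (1:ℝ)) z)

/-- The normalizing constant `c_ε^{k,+}`. -/
noncomputable def cPlus (W : StieltjesFunction ℝ) (ε : ℝ) (k : ℕ) : ℝ :=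
  ε⁻¹ * (∫ y in Set.Ioc (0:ℝ) 1, (∫ z in (0:ℝ)..y, gPlus k z) ∂W.measure)⁻¹

/-- The normalizing constant `c_ε^{k,−}`. -/
noncomputable def cMinus (W : StieltjesFunction ℝ) (ε : ℝ) (k : ℕ) : ℝ :=
  ε⁻¹ * (∫ y in Set.Ioc (0:ℝ) 1, (∫ z in (0:ℝ)..y, gMinus ε k z) ∂W.measure)⁻¹

/-- `g_ε^k = c_ε^{k,+} g_ε^{k,+} − c_ε^{k,−} g_ε^{k,−}`. -/
noncomputable def gEpsK (W : StieltjesFunction ℝ) (ε : ℝ) (k : ℕ) (z : ℝ) : ℝ :=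
  cPlus W ε k * gPlus k z - cMinus W ε k * gMinus ε k z

/-- `ι_ε^k(u) = ∫_{(0,u]} (∫₀^y g_ε^k(z) dz) W(dy)`. -/
noncomputable def iotaK (W : StieltjesFunction ℝ) (ε : ℝ) (k : ℕ) (u : ℝ) : ℝ :=
  ∫ y in Set.Ioc (0:ℝ) u, (∫ z in (0:ℝ)..y, gEpsK W ε k z) ∂W.measure

/-- The approximation of the identity `ι_ε = ε⁻¹ 1_{[0,ε]}`. -/
noncomputable def iotaEps (ε : ℝ) (y : ℝ) : ℝ :=
  ε⁻¹ * (Set.Icc (0:ℝ) ε).indicator (fun _ => (1:ℝ)) y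

open Filter Topology

section Tent

noncomputable def dipole (a h z : ℝ) : ℝ :=
  h⁻¹ * ((Ioc a (a + h)).indicator (fun _ => (1:ℝ)) z
    - (Ioc (a + h) (a + 2 * h)).indicator (fun _ => (1:ℝ)) z)

noncomputable def tent (a h y : ℝ) : ℝ := ∫ z in (0:ℝ)..y, dipole a h z

lemma integrable_indicator_one_Ioc (a b : ℝ) :
    Integrable ((Ioc a b).indicator fun _ => (1:ℝ)) :=
  (integrable_indicator_iff measurableSet_Ioc).2 (integrableOn_const measure_Ioc_lt_top.ne)

lemma integrable_dipole (a h : ℝ) : Integrable (dipole a h) :=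
  ((integrable_indicator_one_Ioc _ _).sub (integrable_indicator_one_Ioc _ _)).const_mul _

lemma intervalIntegral_indicator_one_Ioc {a b : ℝ} (ha : 0 ≤ a) (hab : a ≤ b) (y : ℝ) :
    ∫ z in (0:ℝ)..y, (Ioc a b).indicator (fun _ => (1:ℝ)) z = max 0 (min b y - a) := by
  rcases le_or_gt 0 y with hy | hy
  · rw [intervalIntegral.integral_of_le hy, setIntegral_indicator measurableSet_Ioc,
      setIntegral_const, Ioc_inter_Ioc, Measure.real, Real.volume_Ioc, max_eq_right ha,
      min_comm y b, smul_eq_mul, mul_one, ENNReal.toReal_ofReal', max_comm]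
  · have hzero : ∀ z ∈ Ioc y 0, (Ioc a b).indicator (fun _ => (1:ℝ)) z = 0 := fun z hz =>
      indicator_of_notMem (fun hz' => (hz.2.trans ha).not_gt hz'.1) _
    rw [intervalIntegral.integral_of_ge hy.le, setIntegral_congr_fun measurableSet_Ioc hzero,
      integral_zero, neg_zero, min_eq_right (by linarith), max_eq_left (by linarith)]

variable {a h : ℝ}

lemma tent_eq (ha : 0 ≤ a) (hh : 0 ≤ h) (y : ℝ) :
    tent a h y = h⁻¹ * (max 0 (min (a + h) y - a) - max 0 (min (a + 2 * h) y - (a + h))) := by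
  have hi := fun b c => (integrable_indicator_one_Ioc b c).intervalIntegrable (μ := volume)
    (a := 0) (b := y)
  simp only [tent, dipole]
  rw [intervalIntegral.integral_const_mul,
    intervalIntegral.integral_sub (hi _ _) (hi _ _),
    intervalIntegral_indicator_one_Ioc ha (by linarith),
    intervalIntegral_indicator_one_Ioc (by linarith) (by linarith)]

lemma tent_nonneg (ha : 0 ≤ a) (hh : 0 ≤ h) (y : ℝ) : 0 ≤ tent a h y := by
  rw [tent_eq ha hh]
  refine mul_nonneg (inv_nonneg.2 hh) ?_
  simp only [max_def, min_def]
  split_ifs <;> linarith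

lemma tent_pos (ha : 0 ≤ a) (hh : 0 < h) {y : ℝ} (hay : a < y) (hy : y ≤ a + h) :
    0 < tent a h y := by
  rw [tent_eq ha hh.le]
  refine mul_pos (inv_pos.2 hh) ?_
  simp only [max_def, min_def]
  split_ifs <;> linarith

lemma tent_eq_zero_of_le (ha : 0 ≤ a) (hh : 0 ≤ h) {y : ℝ} (hy : y ≤ a) : tent a h y = 0 := by
  rw [tent_eq ha hh, mul_eq_zero]
  right
  simp only [max_def, min_def]
  split_ifs <;> linarith

lemma tent_eq_zero_of_ge (ha : 0 ≤ a) (hh : 0 ≤ h) {y : ℝ} (hy : a + 2 * h ≤ y) :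
    tent a h y = 0 := by
  rw [tent_eq ha hh, mul_eq_zero]
  right
  simp only [max_def, min_def]
  split_ifs <;> linarith

lemma continuous_tent (a h : ℝ) : Continuous (tent a h) :=
  intervalIntegral.continuous_primitive (fun _ _ => (integrable_dipole a h).intervalIntegrable) 0

end Tent

lemma gPlus_eq_dipole (k : ℕ) : gPlus k = dipole 0 (1 / k) := by
  ext z
  rw [gPlus, dipole, ← one_div, one_div_one_div, zero_add, zero_add, mul_one_div]

lemma gMinus_eq_dipole (ε : ℝ) (k : ℕ) : gMinus ε k = dipole (ε - 1 / k) (1 / k) := by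
  ext z
  rw [gMinus, dipole, ← one_div, one_div_one_div, sub_add_cancel,
    show ε - 1 / k + 2 * (1 / k) = ε + 1 / k by ring]

section RelativeMass

variable {μ : Measure ℝ} {f : ℝ → ℝ} {u : ℝ}

noncomputable def relMass (μ : Measure ℝ) (f : ℝ → ℝ) (u : ℝ) : ℝ :=
  (∫ y in Ioc 0 u, f y ∂μ) / ∫ y in Ioc 0 1, f y ∂μ

lemma monotone_setIntegral_Ioc [IsLocallyFiniteMeasure μ] (hf : Continuous f) (hf0 : 0 ≤ f) :
    Monotone fun u => ∫ y in Ioc 0 u, f y ∂μ := fun _ _ huv =>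
  setIntegral_mono_set hf.integrableOn_Ioc (.of_forall hf0) (Ioc_subset_Ioc_right huv).eventuallyLE

lemma measurable_relMass [IsLocallyFiniteMeasure μ] (hf : Continuous f) (hf0 : 0 ≤ f) :
    Measurable (relMass μ f) :=
  (monotone_setIntegral_Ioc hf hf0).measurable.div_const _

lemma relMass_mem_Icc [IsLocallyFiniteMeasure μ] (hf : Continuous f) (hf0 : 0 ≤ f)
    (hu : u ≤ 1) : relMass μ f u ∈ Icc 0 1 :=
  have hnonneg := fun v => setIntegral_nonneg (μ := μ) (s := Ioc 0 v) measurableSet_Ioc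
    fun y _ => hf0 y
  ⟨div_nonneg (hnonneg u) (hnonneg 1),
    div_le_one_of_le₀ (monotone_setIntegral_Ioc hf hf0 hu) (hnonneg 1)⟩

lemma relMass_eq_zero {a : ℝ} (hf : ∀ y ∈ Ioc 0 a, f y = 0) (hu : u ≤ a) :
    relMass μ f u = 0 := by
  rw [relMass, setIntegral_eq_zero_of_forall_eq_zero fun y hy => hf y ⟨hy.1, hy.2.trans hu⟩,
    zero_div]

lemma relMass_eq_one {b : ℝ} (hpos : 0 < ∫ y in Ioc 0 1, f y ∂μ)
    (hf : ∀ y ∈ Ioc b 1, f y = 0) (hbu : b ≤ u) (hu : u ≤ 1) : relMass μ f u = 1 := by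
  rw [relMass, ← setIntegral_eq_of_subset_of_forall_sdiff_eq_zero measurableSet_Ioc
    (Ioc_subset_Ioc_right hu) fun y hy => hf y ⟨hbu.trans_lt (not_le.1 fun h => hy.2 ⟨hy.1.1, h⟩),
      hy.1.2⟩, div_self hpos.ne']

lemma setIntegral_pos_of_pos_on {s t : Set ℝ} (hf0 : 0 ≤ f) (hft : IntegrableOn f t μ)
    (hst : s ⊆ t) (hfs : ∀ y ∈ s, 0 < f y) (hs : 0 < μ s) : 0 < ∫ y in t, f y ∂μ := by
  rw [setIntegral_pos_iff_support_of_nonneg_ae (.of_forall hf0) hft]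
  exact hs.trans_le (measure_mono fun y hy => ⟨(hfs y hy).ne', hst hy⟩)

end RelativeMass

lemma StieltjesFunction.measure_Ioc_pos {W : StieltjesFunction ℝ} (hW : StrictMono W) {a b : ℝ}
    (hab : a < b) : 0 < W.measure (Ioc a b) := by
  rw [W.measure_Ioc, ENNReal.ofReal_pos, sub_pos]
  exact hW hab

lemma tendsto_integral_sq_sub_of_tendsto_ae {α ι : Type*} [MeasurableSpace α] {μ : Measure α}
    [IsFiniteMeasure μ] {l : Filter ι} [l.IsCountablyGenerated] {F : ι → α → ℝ} {G : α → ℝ}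
    {C : ℝ} (hF : ∀ᶠ i in l, AEStronglyMeasurable (F i) μ) (hG : AEStronglyMeasurable G μ)
    (hFC : ∀ᶠ i in l, ∀ᵐ x ∂μ, |F i x| ≤ C) (hGC : ∀ᵐ x ∂μ, |G x| ≤ C)
    (hlim : ∀ᵐ x ∂μ, Tendsto (fun i => F i x) l (𝓝 (G x))) :
    Tendsto (fun i => ∫ x, (F i x - G x) ^ 2 ∂μ) l (𝓝 0) := by
  have h := tendsto_integral_filter_of_dominated_convergence (μ := μ)
    (F := fun i x => (F i x - G x) ^ 2) (f := fun _ => 0) (fun _ => (2 * C) ^ 2)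
    (hF.mono fun i hi => (hi.sub hG).pow 2)
    (hFC.mono fun i hi => by
      filter_upwards [hi, hGC] with x hFx hGx
      obtain ⟨hF₁, hF₂⟩ := abs_le.1 hFx
      obtain ⟨hG₁, hG₂⟩ := abs_le.1 hGx
      rw [Real.norm_of_nonneg (sq_nonneg _)]
      exact sq_le_sq' (by linarith) (by linarith))
    (integrable_const _)
    (hlim.mono fun x hx => by simpa using (hx.sub_const (G x)).pow 2)
  simpa using h

section TentMass

variable {μ : Measure ℝ} {a h u : ℝ}

lemma relMass_tent_eq_zero (ha : 0 ≤ a) (hh : 0 ≤ h) (hu : u ≤ a) : relMass μ (tent a h) u = 0 :=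
  relMass_eq_zero (fun _ hy => tent_eq_zero_of_le ha hh hy.2) hu

variable [IsLocallyFiniteMeasure μ]

lemma relMass_tent_mem_Icc (ha : 0 ≤ a) (hh : 0 ≤ h) (hu : u ≤ 1) :
    relMass μ (tent a h) u ∈ Icc 0 1 :=
  relMass_mem_Icc (continuous_tent a h) (tent_nonneg ha hh) hu

lemma relMass_tent_eq_one (ha : 0 ≤ a) (hh : 0 < h) (ha1 : a + h ≤ 1)
    (hμ : 0 < μ (Ioc a (a + h))) (hu : a + 2 * h ≤ u) (hu1 : u ≤ 1) :
    relMass μ (tent a h) u = 1 :=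
  relMass_eq_one
    (setIntegral_pos_of_pos_on (tent_nonneg ha hh.le) (continuous_tent a h).integrableOn_Ioc
      (Ioc_subset_Ioc ha ha1) (fun _ hy => tent_pos ha hh hy.1 hy.2) hμ)
    (fun _ hy => tent_eq_zero_of_ge ha hh.le hy.1.le) hu hu1

end TentMass

section Iota

variable {W : StieltjesFunction ℝ} {ε u : ℝ} {k : ℕ}

lemma iotaK_eq (W : StieltjesFunction ℝ) (ε : ℝ) (k : ℕ) (u : ℝ) :
    iotaK W ε k u = ε⁻¹ * (relMass W.measure (tent 0 (1 / k)) u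
      - relMass W.measure (tent (ε - 1 / k) (1 / k)) u) := by
  have hdipole : ∀ a h y, IntervalIntegrable (dipole a h) volume 0 y :=
    fun a h _ => (integrable_dipole a h).intervalIntegrable
  have htent : ∀ a h, IntegrableOn (tent a h) (Ioc 0 u) W.measure :=
    fun a h => (continuous_tent a h).integrableOn_Ioc
  have hinner : ∀ y, ∫ z in (0:ℝ)..y, gEpsK W ε k z
      = cPlus W ε k * tent 0 (1 / k) y - cMinus W ε k * tent (ε - 1 / k) (1 / k) y := by
    intro y
    simp only [gEpsK, gPlus_eq_dipole, gMinus_eq_dipole]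
    rw [intervalIntegral.integral_sub ((hdipole _ _ _).const_mul _) ((hdipole _ _ _).const_mul _),
      intervalIntegral.integral_const_mul, intervalIntegral.integral_const_mul, tent, tent]
  simp only [iotaK, hinner]
  rw [integral_sub ((htent _ _).const_mul _) ((htent _ _).const_mul _), integral_const_mul,
    integral_const_mul, cPlus, cMinus, gPlus_eq_dipole, gMinus_eq_dipole]
  simp only [relMass, tent]
  ring

lemma measurable_iotaK (hk : 1 / k ≤ ε) : Measurable (iotaK W ε k) := by
  simp only [funext (iotaK_eq W ε k)]
  exact ((measurable_relMass (continuous_tent _ _) (tent_nonneg le_rfl (by positivity))).sub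
    (measurable_relMass (continuous_tent _ _) (tent_nonneg (sub_nonneg.2 hk)
      (by positivity)))).const_mul _

lemma abs_iotaK_le (hε : 0 < ε) (hk : 1 / k ≤ ε) (hu : u ≤ 1) : |iotaK W ε k u| ≤ ε⁻¹ := by
  obtain ⟨hp₀, hp₁⟩ := relMass_tent_mem_Icc (μ := W.measure) (h := 1 / k) le_rfl (by positivity) hu
  obtain ⟨hm₀, hm₁⟩ := relMass_tent_mem_Icc (μ := W.measure) (h := 1 / k) (sub_nonneg.2 hk) (by positivity) hu
  rw [iotaK_eq, abs_mul, abs_of_pos (inv_pos.2 hε)]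
  exact mul_le_of_le_one_right (inv_nonneg.2 hε.le) (abs_sub_le_iff.2 ⟨by linarith, by linarith⟩)

lemma measurable_iotaEps : Measurable (iotaEps ε) :=
  (measurable_const.indicator measurableSet_Icc).const_mul _

lemma abs_iotaEps_le (hε : 0 < ε) : |iotaEps ε u| ≤ ε⁻¹ := by
  by_cases hu : u ∈ Icc 0 ε
  · rw [iotaEps, indicator_of_mem hu, mul_one, abs_of_pos (inv_pos.2 hε)]
  · rw [iotaEps, indicator_of_notMem hu, mul_zero, abs_zero]
    positivity

lemma eventually_iotaK_eq_iotaEps (hW : StrictMono W) (hε : ε ∈ Ioo 0 1) (hu : u ∈ Ioc 0 1)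
    (huε : u ≠ ε) : ∀ᶠ k : ℕ in atTop, iotaK W ε k u = iotaEps ε u := by
  obtain ⟨hε0, hε1⟩ := hε
  have h1k : Tendsto (fun k : ℕ => 1 / (k:ℝ)) atTop (𝓝[>] 0) :=
    tendsto_nhdsWithin_iff.2 ⟨tendsto_one_div_atTop_nhds_zero_nat,
      (eventually_gt_atTop 0).mono fun k hk => mem_Ioi.2 (one_div_pos.2 (Nat.cast_pos.2 hk))⟩
  rcases huε.lt_or_gt with hlt | hgt
  · filter_upwards [h1k (Ioo_mem_nhdsGT (lt_min (half_pos hu.1) (sub_pos.2 hlt)))]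
      with k ⟨hk0, hk⟩
    obtain ⟨hku, hkε⟩ := lt_min_iff.1 hk
    rw [iotaK_eq, iotaEps, indicator_of_mem (show u ∈ Icc 0 ε from ⟨hu.1.le, hlt.le⟩),
      relMass_tent_eq_one le_rfl hk0 (by linarith) (W.measure_Ioc_pos hW (by linarith))
        (by linarith) hu.2,
      relMass_tent_eq_zero (by linarith) hk0.le (by linarith)]
    ring
  · filter_upwards [h1k (Ioo_mem_nhdsGT (lt_min (half_pos hu.1) (lt_min (sub_pos.2 hgt) hε0)))]
      with k ⟨hk0, hk⟩
    obtain ⟨hku, hkuε, hkε⟩ := lt_min_iff.1 hk |>.imp_right lt_min_iff.1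
    rw [iotaK_eq, iotaEps, indicator_of_notMem fun h => hgt.not_ge h.2,
      relMass_tent_eq_one le_rfl hk0 (by linarith) (W.measure_Ioc_pos hW (by linarith))
        (by linarith) hu.2,
      relMass_tent_eq_one (by linarith) hk0 (by linarith) (W.measure_Ioc_pos hW (by linarith))
        (by linarith) hu.2]
    ring

end Iota

theorem iotaK_tendsto_iotaEps_L2_general (W : StieltjesFunction ℝ) (hW : StrictMono W)
    (ε : ℝ) (hε : ε ∈ Set.Ioo (0:ℝ) 1) :
    Filter.Tendsto (fun k : ℕ => ∫ u in Set.Icc (0:ℝ) 1, (iotaK W ε k u - iotaEps ε u) ^ 2)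
      Filter.atTop (nhds 0) := by
  have hk : ∀ᶠ k : ℕ in atTop, 1 / (k:ℝ) ≤ ε :=
    tendsto_one_div_atTop_nhds_zero_nat.eventually (eventually_le_nhds hε.1)
  have hgood : ∀ᵐ u ∂volume.restrict (Icc 0 1), u ∈ Ioc 0 1 ∧ u ≠ ε := by
    filter_upwards [ae_restrict_mem measurableSet_Icc,
      ae_restrict_of_ae (((countable_singleton ε).insert 0).ae_notMem volume)] with u hu hu'
    simp only [mem_insert_iff, mem_singleton_iff, not_or] at hu'
    exact ⟨⟨hu.1.lt_of_ne' hu'.1, hu.2⟩, hu'.2⟩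
  refine tendsto_integral_sq_sub_of_tendsto_ae (C := ε⁻¹)
    (hk.mono fun k hk => (measurable_iotaK hk).aestronglyMeasurable)
    measurable_iotaEps.aestronglyMeasurable (hk.mono fun k hk => ?_)
    (.of_forall fun u => abs_iotaEps_le hε.1) ?_
  · filter_upwards [ae_restrict_mem measurableSet_Icc] with u hu using abs_iotaK_le hε.1 hk hu.2
  · filter_upwards [hgood] with u hu
    exact tendsto_const_nhds.congr' (eventually_iotaK_eq_iotaEps hW hε hu.1 hu.2 |>.mono
      fun _ h => h.symm)

/-- `ι_ε^k → ι_ε` in `L²([0,1])` as `k → ∞`: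
`lim_{k→∞} ∫₀¹ (ι_ε^k(u) − ι_ε(u))² du = 0`. -/
theorem iotaK_tendsto_iotaEps_L2 (W : StieltjesFunction ℝ) (hW : StrictMono W)
    (hWper : ∀ u : ℝ, W (u + 1) - W u = W 1 - W 0)
    (ε : ℝ) (hε : ε ∈ Set.Ioo (0:ℝ) 1) :
    Filter.Tendsto (fun k : ℕ => ∫ u in Set.Icc (0:ℝ) 1, (iotaK W ε k u - iotaEps ε u) ^ 2)
      Filter.atTop (nhds 0) :=
  iotaK_tendsto_iotaEps_L2_general W hW ε hε
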